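/- Let Σ be an n×n real symmetric matrix with pairwise distinct eigenvalues, i.e., Σ = V Λ Vᵀ where V is orthogonal and Λ is diagonal with pairwise distinct diagonal entries. Let G be a finite group of n×n real matrices, each of which is normal (A Aᵀ = Aᵀ A), has finite order, and satisfies A Σ Aᵀ = Σ. Then G is isomorphic as a group to (ℤ/2ℤ)^k for some natural number k. -/

import Mathlib

/-!
Normality makes `A Aᵀ` positive semidefinite, and it has finite order along with `A`, so it is
the identity: every `A ∈ G` is orthogonal. Then `A S Aᵀ = S` says that `A` commutes with `S`, so
`Vᵀ A V` commutes with `diagonal Λ`; as the entries of `Λ` are distinct, `Vᵀ A V` is diagonal.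
Hence `A` is symmetric and `A² = A Aᵀ = 1`. A group of exponent two is abelian, i.e. a vector
space over `ZMod 2`, and a finite one is `(ZMod 2)^k`.
-/

open Matrix
open scoped ComplexOrder

namespace Matrix

variable {n : Type*} [Fintype n] [DecidableEq n]

theorem PosSemidef.eq_one_of_pow_eq_one {𝕜 : Type*} [RCLike 𝕜] {P : Matrix n n 𝕜}
    (hP : P.PosSemidef) {m : ℕ} (hm : m ≠ 0) (h : P ^ m = 1) : P = 1 := by
  have hsa : IsSelfAdjoint P := hP.isHermitian
  refine CFC.eq_one_of_spectrum_subset_one (R := ℝ) P (fun x hx => ?_) hsa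
  have hx_pow : x ^ m = 1 := by
    have : cfc (· ^ m : ℝ → ℝ) P = cfc (fun _ => (1 : ℝ)) P := by
      rw [cfc_pow_id P m, h, cfc_const_one ℝ P]
    exact (eqOn_of_cfc_eq_cfc this : Set.EqOn _ _ _) hx
  have hx_nonneg : 0 ≤ x := by
    rw [hP.isHermitian.spectrum_real_eq_range_eigenvalues] at hx
    obtain ⟨i, rfl⟩ := hx
    exact hP.eigenvalues_nonneg i
  exact (pow_eq_one_iff_of_nonneg hx_nonneg hm).1 hx_pow

theorem mul_conjTranspose_self_eq_one_of_pow_eq_one {𝕜 : Type*} [RCLike 𝕜]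
    {A : Matrix n n 𝕜} (hA : Commute A Aᴴ) {m : ℕ} (hm : m ≠ 0) (h : A ^ m = 1) : A * Aᴴ = 1 := by
  refine (posSemidef_self_mul_conjTranspose A).eq_one_of_pow_eq_one hm ?_
  rw [hA.mul_pow, h, ← conjTranspose_pow, h, conjTranspose_one, one_mul]

theorem isDiag_of_commute_diagonal {R : Type*} [CommRing R] [NoZeroDivisors R] {d : n → R}
    (hd : Function.Injective d) {B : Matrix n n R} (h : Commute B (diagonal d)) : B.IsDiag := by
  intro i j hij
  by_contra hB
  have hentry := congrFun (congrFun h.eq i) j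
  rw [mul_diagonal, diagonal_mul, mul_comm (d i)] at hentry
  exact hij (hd (mul_left_cancel₀ hB hentry)).symm

theorem commute_of_mul_mul_transpose_eq {R : Type*} [CommRing R] {A S : Matrix n n R}
    (hA : Aᵀ * A = 1) (h : A * S * Aᵀ = S) : Commute A S :=
  calc A * S = A * S * (Aᵀ * A) := by rw [hA, mul_one]
    _ = S * A := by rw [← mul_assoc, h]

theorem isSymm_of_commute_of_eq_mul_diagonal_mul_transpose {R : Type*} [CommRing R]
    [NoZeroDivisors R] {V S A : Matrix n n R} {d : n → R} (hV : Vᵀ * V = 1)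
    (hd : Function.Injective d) (hS : S = V * diagonal d * Vᵀ) (h : Commute A S) : A.IsSymm := by
  have hV' : V * Vᵀ = 1 := mul_eq_one_comm.mp hV
  have hA_conj : A = V * (Vᵀ * A * V) * Vᵀ :=
    calc A = V * Vᵀ * A * (V * Vᵀ) := by rw [hV', one_mul, mul_one]
      _ = V * (Vᵀ * A * V) * Vᵀ := by simp only [mul_assoc]
  have hd_conj : diagonal d = Vᵀ * S * V :=
    calc diagonal d = Vᵀ * V * diagonal d * (Vᵀ * V) := by rw [hV, one_mul, mul_one]
      _ = Vᵀ * S * V := by simp only [hS, mul_assoc]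
  have hcomm_diag : Commute (Vᵀ * A * V) (diagonal d) :=
    calc Vᵀ * A * V * diagonal d = Vᵀ * (A * (V * Vᵀ) * S) * V := by
          simp only [hd_conj, mul_assoc]
      _ = Vᵀ * (S * (V * Vᵀ) * A) * V := by rw [hV', mul_one, mul_one, h.eq]
      _ = diagonal d * (Vᵀ * A * V) := by simp only [hd_conj, mul_assoc]
  rw [IsSymm, hA_conj, transpose_mul, transpose_mul, transpose_transpose,
    (isDiag_of_commute_diagonal hd hcomm_diag).isSymm.eq]
  simp only [mul_assoc]

theorem mul_self_eq_one_of_mul_mul_transpose_eq {V S A : Matrix n n ℝ} {d : n → ℝ}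
    (hV : Vᵀ * V = 1) (hd : Function.Injective d) (hS : S = V * diagonal d * Vᵀ)
    (hA_normal : A * Aᵀ = Aᵀ * A) {m : ℕ} (hm : m ≠ 0) (hA_pow : A ^ m = 1)
    (hAS : A * S * Aᵀ = S) : A * A = 1 := by
  have hcomm : Commute A Aᴴ := by
    rw [conjTranspose_eq_transpose_of_trivial]
    exact hA_normal
  have horth : A * Aᵀ = 1 := by
    simpa only [conjTranspose_eq_transpose_of_trivial] using
      mul_conjTranspose_self_eq_one_of_pow_eq_one hcomm hm hA_pow
  have hsymm : A.IsSymm := isSymm_of_commute_of_eq_mul_diagonal_mul_transpose hV hd hS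
    (commute_of_mul_mul_transpose_eq (mul_eq_one_comm.mp horth) hAS)
  rwa [hsymm.eq] at horth

end Matrix

theorem AddCommGroup.exists_addEquiv_fin_pi_zmod {p : ℕ} [Fact p.Prime] {G : Type*}
    [AddCommGroup G] [Finite G] (h : ∀ g : G, p • g = 0) :
    ∃ k : ℕ, Nonempty (G ≃+ (Fin k → ZMod p)) := by
  -- Bound opaquely: `zmodModule` matches on `p`, which would block instance unification.
  obtain ⟨_⟩ : Nonempty (Module (ZMod p) G) := ⟨AddCommGroup.zmodModule h⟩
  exact ⟨_, ⟨(Module.finBasis (ZMod p) G).equivFun.toAddEquiv⟩⟩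

theorem CommGroup.exists_mulEquiv_fin_pi_zmod {p : ℕ} [Fact p.Prime] {G : Type*}
    [CommGroup G] [Finite G] (h : ∀ g : G, g ^ p = 1) :
    ∃ k : ℕ, Nonempty (G ≃* (Fin k → Multiplicative (ZMod p))) := by
  obtain ⟨k, ⟨e⟩⟩ := AddCommGroup.exists_addEquiv_fin_pi_zmod (G := Additive G) h
  exact ⟨k, ⟨(MulEquiv.multiplicativeAdditive G).symm.trans
    ((AddEquiv.toMultiplicative e).trans (MulEquiv.piMultiplicative _))⟩⟩

theorem exists_mulEquiv_fin_pi_zmod_two_of_sq_eq_one {G : Type*} [Group G] [Finite G]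
    (h : ∀ g : G, g ^ 2 = 1) :
    ∃ k : ℕ, Nonempty (G ≃* (Fin k → Multiplicative (ZMod 2))) :=
  let : CommGroup G :=
    { mul_comm := Commute.of_orderOf_dvd_two fun g => orderOf_dvd_of_pow_eq_one (h g) }
  CommGroup.exists_mulEquiv_fin_pi_zmod h

/-- If `Σ` is a real symmetric matrix with pairwise distinct eigenvalues and `G` is a finite
group of `n×n` real matrices, each of which is normal, of finite order, and satisfies
`A Σ Aᵀ = Σ`, then `G ≅ (ℤ/2ℤ)^k` for some `k`. -/
theorem symmetry_group_is_elementary_abelian_two_group (n : ℕ)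
    (S : Matrix (Fin n) (Fin n) ℝ)
    (V : Matrix (Fin n) (Fin n) ℝ) (hV : Vᵀ * V = 1)
    (Λ : Fin n → ℝ) (hΛ : Function.Injective Λ)
    (hdecomp : S = V * Matrix.diagonal Λ * Vᵀ)
    (G : Subgroup (GL (Fin n) ℝ)) [Finite G]
    (hnormal : ∀ A ∈ G, (A : Matrix (Fin n) (Fin n) ℝ) * (A : Matrix (Fin n) (Fin n) ℝ)ᵀ =
      (A : Matrix (Fin n) (Fin n) ℝ)ᵀ * (A : Matrix (Fin n) (Fin n) ℝ))
    (hord : ∀ A ∈ G, ∃ m : ℕ, 1 ≤ m ∧ (A : Matrix (Fin n) (Fin n) ℝ) ^ m = 1)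
    (hsym : ∀ A ∈ G, (A : Matrix (Fin n) (Fin n) ℝ) * S * (A : Matrix (Fin n) (Fin n) ℝ)ᵀ = S) :
    ∃ k : ℕ, Nonempty (G ≃* (Fin k → Multiplicative (ZMod 2))) := by
  refine exists_mulEquiv_fin_pi_zmod_two_of_sq_eq_one fun g => ?_
  obtain ⟨m, hm, hpow⟩ := hord g g.2
  have hsq := mul_self_eq_one_of_mul_mul_transpose_eq hV hΛ hdecomp (hnormal g g.2)
    (Nat.one_le_iff_ne_zero.mp hm) hpow (hsym g g.2)
  ext : 2
  simpa [sq] using hsq
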